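/- (Explicit form of Proposition 6.2(a): adding a spurious candidate increases the Schwarz criterion.) Let n ≥ 1, ξ > 0, C' > 0, ω > 0. Let x_t = f_t + ε_t for t = 1, …, n, where ε satisfies the uniform interval bound with level ω. Let A ⊆ {1, …, n−1}, let c_∘ ∈ {1, …, n−1} \ A, and let c_- be the largest element of A ∪ {0} smaller than c_∘ and c_+ the smallest element of A ∪ {n} larger than c_∘. Assume f is constant on {c_-+1, …, c_+} (no change point in the local window), that C' n ≤ RSS(A ∪ {c_∘}; x), and that ξ > 2ω²/C'. Then SC(A; x) < SC(A ∪ {c_∘}; x). -/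

import Mathlib

open Finset

/-- Mean of `x` over the interval `(s, e]`. -/
noncomputable def segMean (x : ℕ → ℝ) (s e : ℕ) : ℝ :=
  (∑ t ∈ Finset.Ioc s e, x t) / ((e : ℝ) - (s : ℝ))

/-- CUSUM statistic of `x` at split point `b` on the interval `(s, e]`. -/
noncomputable def cusum (x : ℕ → ℝ) (s b e : ℕ) : ℝ :=
  Real.sqrt (((b : ℝ) - s) * ((e : ℝ) - b) / ((e : ℝ) - s)) *
    (segMean x s b - segMean x b e)

/-- Largest element of `A ∪ {0}` that is `< t`. -/
def lbd (A : Finset ℕ) (t : ℕ) : ℕ :=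
  WithBot.unbotD 0 ((insert 0 A).filter (fun a => a < t)).max

/-- Smallest element of `A ∪ {n}` that is `≥ t`. -/
def ubd (A : Finset ℕ) (n t : ℕ) : ℕ :=
  WithTop.untopD n (((insert n A).filter (fun a => t ≤ a)).min)

/-- Residual sum of squares of `x_1, …, x_n` with respect to the segmentation
of `{1, …, n}` induced by the set of change point candidates `A`:
each `t` lies in the segment `(lbd A t, ubd A n t]`. -/
noncomputable def RSS (x : ℕ → ℝ) (n : ℕ) (A : Finset ℕ) : ℝ :=
  ∑ t ∈ Finset.Icc 1 n, (x t - segMean x (lbd A t) (ubd A n t)) ^ 2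

/-- Schwarz criterion with penalty `ξ`. -/
noncomputable def SC (x : ℕ → ℝ) (n : ℕ) (ξ : ℝ) (A : Finset ℕ) : ℝ :=
  ((n : ℝ) / 2) * Real.log (RSS x n A / n) + (A.card : ℝ) * ξ

/-- `ε_1, …, ε_n` satisfies the uniform interval bound with level `ω`:
`|∑_{t=s+1}^e ε_t| ≤ ω √(e − s)` for all `0 ≤ s < e ≤ n`. -/
def UIB (ε : ℕ → ℝ) (n : ℕ) (ω : ℝ) : Prop :=
  ∀ s e : ℕ, s < e → e ≤ n →
    |∑ t ∈ Finset.Ioc s e, ε t| ≤ ω * Real.sqrt ((e : ℝ) - s)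

/-!
Outside the window `(c₋, c₊]` the segmentations induced by `A` and by `A ∪ {c₀}` coincide,
and inside it the classical CUSUM identity shows that splitting `(c₋, c₊]` at `c₀` lowers the
residual sum of squares by exactly the squared CUSUM statistic of `x`. As `f` is constant on
the window, this is the CUSUM statistic of `ε`, which the uniform interval bound caps at `2ω²`.
Since `log (1 + u) ≤ u` and `RSS(A ∪ {c₀}) ≥ C' n`, the log term of the Schwarz criterion thus
drops by at most `ω² / C' < ξ`, less than the penalty of the extra candidate.
-/

lemma lbd_eq_of_gap {A : Finset ℕ} {m e t : ℕ} (hm : m ∈ insert 0 A)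
    (hgap : ∀ a ∈ A, a ≤ m ∨ e ≤ a) (ht : t ∈ Ioc m e) : lbd A t = m := by
  obtain ⟨hmt, hte⟩ := mem_Ioc.mp ht
  have hmax : ((insert 0 A).filter (fun a => a < t)).max = WithBot.some m := by
    refine le_antisymm (Finset.max_le fun a ha => ?_) (le_max (mem_filter.mpr ⟨hm, hmt⟩))
    obtain ⟨ha, hat⟩ := mem_filter.mp ha
    suffices a ≤ m from WithBot.coe_le_coe.mpr this
    rcases mem_insert.mp ha with rfl | ha
    · exact Nat.zero_le m
    · have := hgap a ha
      omega
  rw [lbd, hmax]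
  rfl

lemma ubd_eq_of_gap {A : Finset ℕ} {n m e t : ℕ} (he : e ∈ insert n A) (hen : e ≤ n)
    (hgap : ∀ a ∈ A, a ≤ m ∨ e ≤ a) (ht : t ∈ Ioc m e) : ubd A n t = e := by
  obtain ⟨hmt, hte⟩ := mem_Ioc.mp ht
  have hmin : ((insert n A).filter (fun a => t ≤ a)).min = WithTop.some e := by
    refine le_antisymm (min_le (mem_filter.mpr ⟨he, hte⟩)) (Finset.le_min fun a ha => ?_)
    obtain ⟨ha, hta⟩ := mem_filter.mp ha
    suffices e ≤ a from WithTop.coe_le_coe.mpr this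
    rcases mem_insert.mp ha with rfl | ha
    · exact hen
    · have := hgap a ha
      omega
  rw [ubd, hmin]
  rfl

lemma lbd_insert_of_le {A : Finset ℕ} {c t : ℕ} (h : t ≤ c) : lbd (insert c A) t = lbd A t := by
  rw [lbd, lbd, insert_comm, filter_insert, if_neg (by omega)]

lemma lbd_insert_of_mem {A : Finset ℕ} {a c t : ℕ} (ha : a ∈ A) (hca : c ≤ a) (hat : a < t) :
    lbd (insert c A) t = lbd A t := by
  have hc : (c : WithBot ℕ) ≤ ((insert 0 A).filter (fun a => a < t)).max :=
    (WithBot.coe_le_coe.mpr hca).trans (le_max (mem_filter.mpr ⟨mem_insert_of_mem ha, hat⟩))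
  rw [lbd, lbd, insert_comm, filter_insert, if_pos (by omega), max_insert]
  exact congrArg _ (max_eq_right hc)

lemma ubd_insert_of_lt {A : Finset ℕ} {n c t : ℕ} (h : c < t) :
    ubd (insert c A) n t = ubd A n t := by
  rw [ubd, ubd, insert_comm, filter_insert, if_neg (by omega)]

lemma ubd_insert_of_mem {A : Finset ℕ} {n a c t : ℕ} (ha : a ∈ A) (hta : t ≤ a) (hac : a ≤ c) :
    ubd (insert c A) n t = ubd A n t := by
  have hc : ((insert n A).filter (fun a => t ≤ a)).min ≤ (c : WithTop ℕ) :=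
    (min_le (mem_filter.mpr ⟨mem_insert_of_mem ha, hta⟩)).trans (WithTop.coe_le_coe.mpr hac)
  rw [ubd, ubd, insert_comm, filter_insert, if_pos (by omega), min_insert]
  exact congrArg _ (min_eq_right hc)

lemma sum_Ioc_eq_mul_segMean (x : ℕ → ℝ) {s e : ℕ} (h : s < e) :
    ∑ t ∈ Ioc s e, x t = ((e : ℝ) - s) * segMean x s e := by
  rw [segMean, mul_div_cancel₀ _ (sub_pos.mpr (by exact_mod_cast h)).ne']

lemma sum_sq_sub_eq_sum_sq_sub_segMean_add (x : ℕ → ℝ) {s e : ℕ} (h : s < e) (m : ℝ) :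
    ∑ t ∈ Ioc s e, (x t - m) ^ 2
      = ∑ t ∈ Ioc s e, (x t - segMean x s e) ^ 2 + ((e : ℝ) - s) * (segMean x s e - m) ^ 2 := by
  have hcard : ((#(Ioc s e) : ℕ) : ℝ) = (e : ℝ) - s := by
    rw [Nat.card_Ioc, Nat.cast_sub h.le]
  have hsum := sum_Ioc_eq_mul_segMean x h
  set μ := segMean x s e
  have hexpand : ∀ t ∈ Ioc s e,
      (x t - m) ^ 2 = (x t - μ) ^ 2 + 2 * (μ - m) * x t + (μ - m) * -(m + μ) :=
    fun t _ => by ring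
  rw [sum_congr rfl hexpand, sum_add_distrib, sum_add_distrib, ← mul_sum, sum_const, hsum,
    nsmul_eq_mul, hcard]
  ring

lemma cusum_sq (x : ℕ → ℝ) {s b e : ℕ} (hsb : s ≤ b) (hbe : b ≤ e) :
    cusum x s b e ^ 2 = ((b : ℝ) - s) * ((e : ℝ) - b) / ((e : ℝ) - s) *
      (segMean x s b - segMean x b e) ^ 2 := by
  have hsb' : (s : ℝ) ≤ b := by exact_mod_cast hsb
  have hbe' : (b : ℝ) ≤ e := by exact_mod_cast hbe
  rw [cusum, mul_pow, Real.sq_sqrt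
    (div_nonneg (mul_nonneg (sub_nonneg.mpr hsb') (sub_nonneg.mpr hbe')) (by linarith))]

lemma sum_sq_sub_segMean_sub_split (x : ℕ → ℝ) {s b e : ℕ} (hsb : s < b) (hbe : b < e) :
    ∑ t ∈ Ioc s e, (x t - segMean x s e) ^ 2
      - (∑ t ∈ Ioc s b, (x t - segMean x s b) ^ 2 + ∑ t ∈ Ioc b e, (x t - segMean x b e) ^ 2)
      = cusum x s b e ^ 2 := by
  have hmean : ((e : ℝ) - s) * segMean x s e
      = ((b : ℝ) - s) * segMean x s b + ((e : ℝ) - b) * segMean x b e := by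
    rw [← sum_Ioc_eq_mul_segMean x (hsb.trans hbe), ← sum_Ioc_eq_mul_segMean x hsb,
      ← sum_Ioc_eq_mul_segMean x hbe, sum_Ioc_consecutive x hsb.le hbe.le]
  rw [← sum_Ioc_consecutive (fun t => (x t - segMean x s e) ^ 2) hsb.le hbe.le,
    sum_sq_sub_eq_sum_sq_sub_segMean_add x hsb, sum_sq_sub_eq_sum_sq_sub_segMean_add x hbe,
    cusum_sq x hsb.le hbe.le]
  have hse : (0 : ℝ) < e - s := sub_pos.mpr (by exact_mod_cast hsb.trans hbe)
  have hμ : segMean x s e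
      = (((b : ℝ) - s) * segMean x s b + ((e : ℝ) - b) * segMean x b e) / ((e : ℝ) - s) := by
    rw [eq_div_iff hse.ne', mul_comm, hmean]
  rw [hμ]
  field_simp
  ring

lemma sum_Ioc_sq_sub_segMean_lbd_ubd_of_gap (x : ℕ → ℝ) {n : ℕ} {A : Finset ℕ} {m e : ℕ}
    (hm : m ∈ insert 0 A) (he : e ∈ insert n A) (hen : e ≤ n) (hgap : ∀ a ∈ A, a ≤ m ∨ e ≤ a) :
    ∑ t ∈ Ioc m e, (x t - segMean x (lbd A t) (ubd A n t)) ^ 2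
      = ∑ t ∈ Ioc m e, (x t - segMean x m e) ^ 2 :=
  sum_congr rfl fun t ht => by rw [lbd_eq_of_gap hm hgap ht, ubd_eq_of_gap he hen hgap ht]

lemma RSS_sub_RSS_insert (x : ℕ → ℝ) {n : ℕ} {A : Finset ℕ} {m c e : ℕ}
    (hm : m ∈ insert 0 A) (he : e ∈ insert n A) (hen : e ≤ n) (hmc : m < c) (hce : c < e)
    (hgap : ∀ a ∈ A, a ≤ m ∨ e ≤ a) :
    RSS x n A - RSS x n (insert c A) = cusum x m c e ^ 2 := by
  have hwin : Ioc m e ⊆ Icc 1 n := fun t ht => by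
    simp only [mem_Ioc, mem_Icc] at ht ⊢
    omega
  have hout : ∀ t ∈ Icc 1 n \ Ioc m e,
      (x t - segMean x (lbd (insert c A) t) (ubd (insert c A) n t)) ^ 2
        = (x t - segMean x (lbd A t) (ubd A n t)) ^ 2 := by
    intro t ht
    simp only [mem_sdiff, mem_Icc, mem_Ioc, not_and, not_le] at ht
    rcases le_or_gt t m with htm | hmt
    · have hmA : m ∈ A := (mem_insert.mp hm).resolve_left (by omega)
      rw [lbd_insert_of_le (by omega), ubd_insert_of_mem hmA htm hmc.le]
    · have heA : e ∈ A := (mem_insert.mp he).resolve_left (by omega)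
      rw [lbd_insert_of_mem heA hce.le (ht.2 hmt), ubd_insert_of_lt (by omega)]
  have hgap_left : ∀ a ∈ insert c A, a ≤ m ∨ c ≤ a := by
    simp only [mem_insert, forall_eq_or_imp, le_refl, or_true, true_and]
    exact fun a ha => (hgap a ha).imp_right hce.le.trans
  have hgap_right : ∀ a ∈ insert c A, a ≤ c ∨ e ≤ a := by
    simp only [mem_insert, forall_eq_or_imp, le_refl, true_or, true_and]
    exact fun a ha => (hgap a ha).imp_left (le_trans · hmc.le)
  rw [RSS, RSS, ← sum_sdiff hwin, ← sum_sdiff hwin, sum_congr rfl hout,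
    sum_Ioc_sq_sub_segMean_lbd_ubd_of_gap x hm he hen hgap,
    ← sum_Ioc_consecutive
      (fun t => (x t - segMean x (lbd (insert c A) t) (ubd (insert c A) n t)) ^ 2) hmc.le hce.le,
    sum_Ioc_sq_sub_segMean_lbd_ubd_of_gap x (insert_subset_insert 0 (subset_insert c A) hm)
      (mem_insert_of_mem (mem_insert_self c A)) (hce.le.trans hen) hgap_left,
    sum_Ioc_sq_sub_segMean_lbd_ubd_of_gap x (mem_insert_of_mem (mem_insert_self c A))
      (insert_subset_insert n (subset_insert c A) he) hen hgap_right,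
    ← sum_sq_sub_segMean_sub_split x hmc hce]
  ring

lemma segMean_add_of_eqOn {f ε : ℕ → ℝ} {k : ℝ} {s e : ℕ} (hse : s < e)
    (hf : ∀ t ∈ Ioc s e, f t = k) :
    segMean (fun t => f t + ε t) s e = k + segMean ε s e := by
  have hne : ((e : ℝ) - s) ≠ 0 := (sub_pos.mpr (by exact_mod_cast hse)).ne'
  rw [segMean, segMean, sum_add_distrib, sum_congr rfl hf, sum_const, Nat.card_Ioc, nsmul_eq_mul,
    Nat.cast_sub hse.le, add_div, mul_div_cancel_left₀ _ hne]

lemma cusum_add_of_eqOn {f ε : ℕ → ℝ} {k : ℝ} {s b e : ℕ} (hsb : s < b) (hbe : b < e)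
    (hf : ∀ t ∈ Ioc s e, f t = k) :
    cusum (fun t => f t + ε t) s b e = cusum ε s b e := by
  rw [cusum, cusum,
    segMean_add_of_eqOn hsb fun t ht => hf t (Ioc_subset_Ioc_right hbe.le ht),
    segMean_add_of_eqOn hbe fun t ht => hf t (Ioc_subset_Ioc_left hsb.le ht),
    add_sub_add_left_eq_sub]

lemma UIB.abs_segMean_le {ε : ℕ → ℝ} {n : ℕ} {ω : ℝ} (hε : UIB ε n ω) {s e : ℕ}
    (hse : s < e) (hen : e ≤ n) : |segMean ε s e| ≤ ω / √((e : ℝ) - s) := by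
  have hpos : (0 : ℝ) < e - s := sub_pos.mpr (by exact_mod_cast hse)
  rw [segMean, abs_div, abs_of_pos hpos, div_le_div_iff₀ hpos (Real.sqrt_pos.mpr hpos)]
  calc |∑ t ∈ Ioc s e, ε t| * √((e : ℝ) - s)
      ≤ ω * √((e : ℝ) - s) * √((e : ℝ) - s) := by gcongr; exact hε s e hse hen
    _ = ω * ((e : ℝ) - s) := by rw [mul_assoc, Real.mul_self_sqrt hpos.le]

lemma UIB.cusum_sq_le {ε : ℕ → ℝ} {n : ℕ} {ω : ℝ} (hε : UIB ε n ω) {s b e : ℕ}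
    (hsb : s < b) (hbe : b < e) (hen : e ≤ n) : cusum ε s b e ^ 2 ≤ 2 * ω ^ 2 := by
  have hbs : (0 : ℝ) ≤ b - s := sub_nonneg.mpr (by exact_mod_cast hsb.le)
  have heb : (0 : ℝ) ≤ e - b := sub_nonneg.mpr (by exact_mod_cast hbe.le)
  have hdiff : |segMean ε s b - segMean ε b e| ≤ ω / √((b : ℝ) - s) + ω / √((e : ℝ) - b) :=
    (abs_sub _ _).trans
      (add_le_add (hε.abs_segMean_le hsb (hbe.le.trans hen)) (hε.abs_segMean_le hbe hen))
  have hes : (e : ℝ) - s = ((b : ℝ) - s) + ((e : ℝ) - b) := by ring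
  rw [cusum_sq ε hsb.le hbe.le, ← sq_abs, hes, ← Real.sq_sqrt hbs, ← Real.sq_sqrt heb]
  set p := √((b : ℝ) - s)
  set q := √((e : ℝ) - b)
  have hp : 0 < p := Real.sqrt_pos.mpr (sub_pos.mpr (by exact_mod_cast hsb))
  have hq : 0 < q := Real.sqrt_pos.mpr (sub_pos.mpr (by exact_mod_cast hbe))
  calc p ^ 2 * q ^ 2 / (p ^ 2 + q ^ 2) * |segMean ε s b - segMean ε b e| ^ 2
      ≤ p ^ 2 * q ^ 2 / (p ^ 2 + q ^ 2) * (ω / p + ω / q) ^ 2 := by gcongr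
    _ = ω ^ 2 * (p + q) ^ 2 / (p ^ 2 + q ^ 2) := by field_simp; ring
    _ ≤ 2 * ω ^ 2 := by
      rw [div_le_iff₀ (by positivity)]
      nlinarith [mul_nonneg (sq_nonneg ω) (sq_nonneg (p - q))]

lemma half_mul_log_div_sub_le {n R R' C : ℝ} (hn : 0 < n) (hC : 0 < C) (hR' : C * n ≤ R')
    (hle : R' ≤ R) : n / 2 * Real.log (R / n) - n / 2 * Real.log (R' / n) ≤ (R - R') / (2 * C) := by
  have hR'pos : 0 < R' := (mul_pos hC hn).trans_le hR'
  have hRpos : 0 < R := hR'pos.trans_le hle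
  have hlog : Real.log (R / n) - Real.log (R' / n) ≤ (R - R') / R' := by
    rw [← Real.log_div (by positivity) (by positivity), div_div_div_cancel_right₀ hn.ne']
    calc Real.log (R / R') ≤ R / R' - 1 := Real.log_le_sub_one_of_pos (by positivity)
      _ = (R - R') / R' := by field_simp
  calc n / 2 * Real.log (R / n) - n / 2 * Real.log (R' / n)
      = n / 2 * (Real.log (R / n) - Real.log (R' / n)) := by ring
    _ ≤ n / 2 * ((R - R') / (C * n)) := by
      gcongr
      exact hlog.trans (div_le_div_of_nonneg_left (sub_nonneg.mpr hle) (by positivity) hR')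
    _ = (R - R') / (2 * C) := by field_simp

lemma SC_lt_SC_insert {x : ℕ → ℝ} {n : ℕ} {ξ C : ℝ} {A : Finset ℕ} {c : ℕ} (hc : c ∉ A)
    (hn : 0 < n) (hC : 0 < C) (hR' : C * n ≤ RSS x n (insert c A))
    (hle : RSS x n (insert c A) ≤ RSS x n A)
    (hξ : (RSS x n A - RSS x n (insert c A)) / (2 * C) < ξ) :
    SC x n ξ A < SC x n ξ (insert c A) := by
  have := half_mul_log_div_sub_le (Nat.cast_pos.mpr hn) hC hR' hle
  rw [SC, SC, card_insert_of_notMem hc]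
  push_cast
  linarith

theorem sc_increases_spurious_candidate_general
    (n : ℕ) (ξ C' ω : ℝ) (hC' : 0 < C')
    (f ε x : ℕ → ℝ) (hx : ∀ t, x t = f t + ε t) (hε : UIB ε n ω)
    (A : Finset ℕ)
    (c₀ : ℕ) (hc₀ : c₀ ∈ Finset.Icc 1 (n - 1)) (hc₀A : c₀ ∉ A)
    (cm cp : ℕ)
    (hcm1 : cm < c₀) (hcm2 : cm ∈ insert 0 A)
    (hcm3 : ∀ a ∈ insert 0 A, a < c₀ → a ≤ cm)
    (hcp1 : c₀ < cp) (hcp2 : cp ∈ insert n A)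
    (hcp3 : ∀ a ∈ insert n A, c₀ < a → cp ≤ a)
    (hfconst : ∀ t ∈ Finset.Ioc cm cp, ∀ t' ∈ Finset.Ioc cm cp, f t = f t')
    (hRSS : C' * n ≤ RSS x n (insert c₀ A))
    (hξω : 2 * ω ^ 2 / C' < ξ) :
    SC x n ξ A < SC x n ξ (insert c₀ A) := by
  have hc₀n : c₀ < n := by
    have := mem_Icc.mp hc₀
    omega
  have hcpn : cp ≤ n := hcp3 n (mem_insert_self n A) hc₀n
  have hgap : ∀ a ∈ A, a ≤ cm ∨ cp ≤ a := fun a ha =>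
    (lt_or_gt_of_ne (ne_of_mem_of_not_mem ha hc₀A)).imp (hcm3 a (mem_insert_of_mem ha))
      (hcp3 a (mem_insert_of_mem ha))
  have hgain := RSS_sub_RSS_insert x hcm2 hcp2 hcpn hcm1 hcp1 hgap
  have hcusum : cusum x cm c₀ cp ^ 2 ≤ 2 * ω ^ 2 := by
    rw [funext hx, cusum_add_of_eqOn hcm1 hcp1
      fun t ht => hfconst t ht cp (right_mem_Ioc.mpr (hcm1.trans hcp1))]
    exact hε.cusum_sq_le hcm1 hcp1 hcpn
  refine SC_lt_SC_insert hc₀A (by omega) hC' hRSS (by nlinarith [sq_nonneg (cusum x cm c₀ cp)]) ?_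
  calc (RSS x n A - RSS x n (insert c₀ A)) / (2 * C') ≤ 2 * ω ^ 2 / (2 * C') := by
        rw [hgain]
        gcongr
    _ ≤ 2 * ω ^ 2 / C' := by gcongr; linarith
    _ < ξ := hξω

/-- Explicit form of Proposition 6.2(a): if the signal has no change point in
the local window `(c_-, c_+]` around a candidate `c₀ ∉ A`, then adding `c₀` to
`A` increases the Schwarz criterion, provided `C' n ≤ RSS(A ∪ {c₀}; x)` and
`ξ > 2ω²/C'`. -/
theorem sc_increases_spurious_candidate
    (n : ℕ) (hn : 1 ≤ n) (ξ C' ω : ℝ) (hξ : 0 < ξ) (hC' : 0 < C') (hω : 0 < ω)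
    (f ε x : ℕ → ℝ) (hx : ∀ t, x t = f t + ε t) (hε : UIB ε n ω)
    (A : Finset ℕ) (hA : A ⊆ Finset.Icc 1 (n - 1))
    (c₀ : ℕ) (hc₀ : c₀ ∈ Finset.Icc 1 (n - 1)) (hc₀A : c₀ ∉ A)
    (cm cp : ℕ)
    (hcm1 : cm < c₀) (hcm2 : cm ∈ insert 0 A)
    (hcm3 : ∀ a ∈ insert 0 A, a < c₀ → a ≤ cm)
    (hcp1 : c₀ < cp) (hcp2 : cp ∈ insert n A)
    (hcp3 : ∀ a ∈ insert n A, c₀ < a → cp ≤ a)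
    (hfconst : ∀ t ∈ Finset.Ioc cm cp, ∀ t' ∈ Finset.Ioc cm cp, f t = f t')
    (hRSS : C' * n ≤ RSS x n (insert c₀ A))
    (hξω : 2 * ω ^ 2 / C' < ξ) :
    SC x n ξ A < SC x n ξ (insert c₀ A) :=
  sc_increases_spurious_candidate_general n ξ C' ω hC' f ε x hx hε A c₀ hc₀ hc₀A cm cp hcm1 hcm2
    hcm3 hcp1 hcp2 hcp3 hfconst hRSS hξω
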